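/- Let v ≤ v̄ and let D(v) = ρ∫∫r²|v−v'|dμ and Γ(v,v̄) = ½(D(v)+D(v̄)−(v̄−v)ρ∫∫r²dμ). Then Γ(v,v̄) ≤ min(D(v), D(v̄)), i.e. the normalized correlation Γ(v,v̄)/√(D(v)D(v̄)) lies in [0,1] whenever D(v),D(v̄) > 0. -/

import Mathlib

/-! With `a = ∫∫ r²|v - v'| dμ`, `b = ∫∫ r²|v̄ - v'| dμ` and `c = (v̄ - v) ∫∫ r² dμ`, the triangle
inequality under the integral gives `|a - b| ≤ c ≤ a + b`. Since `Γ = ρ (a + b - c) / 2`, this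
squeezes `Γ` between `0` and `ρ min(a, b)`, and `Γ ≤ min(D v, D v̄) ≤ √(D v D v̄)`. -/

open MeasureTheory

section WeightedAbsoluteMoment

variable {α : Type*} [MeasurableSpace α] {μ : Measure α} {w f : α → ℝ}

lemma integrable_of_integrable_mul_one_add_abs (hw : AEStronglyMeasurable w μ) (hw0 : 0 ≤ w)
    (hmom : Integrable (fun x => w x * (1 + |f x|)) μ) : Integrable w μ :=
  hmom.mono' hw <| .of_forall fun x => by
    rw [Real.norm_of_nonneg (hw0 x)]
    nlinarith [mul_nonneg (hw0 x) (abs_nonneg (f x))]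

lemma integrable_mul_abs_sub (hw : AEStronglyMeasurable w μ) (hf : AEStronglyMeasurable f μ)
    (hw0 : 0 ≤ w) (hmom : Integrable (fun x => w x * (1 + |f x|)) μ) (u : ℝ) :
    Integrable (fun x => w x * |u - f x|) μ :=
  (hmom.const_mul (1 + |u|)).mono' (hw.mul (aestronglyMeasurable_const.sub hf).norm) <|
    .of_forall fun x => by
      have hsub : |u - f x| ≤ (1 + |u|) * (1 + |f x|) := by
        nlinarith [abs_sub u (f x), abs_nonneg u, abs_nonneg (f x)]
      rw [Real.norm_of_nonneg (mul_nonneg (hw0 x) (abs_nonneg _))]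
      nlinarith [mul_le_mul_of_nonneg_left hsub (hw0 x)]

variable {v vb : ℝ} (hw0 : 0 ≤ w) (hw : Integrable w μ)
  (hv : Integrable (fun x => w x * |v - f x|) μ) (hvb : Integrable (fun x => w x * |vb - f x|) μ)
include hw0 hw hv hvb

lemma abs_integral_mul_abs_sub_sub_le :
    |∫ x, w x * |v - f x| ∂μ - ∫ x, w x * |vb - f x| ∂μ| ≤ |v - vb| * ∫ x, w x ∂μ := by
  rw [← integral_sub hv hvb, ← integral_const_mul |v - vb| w, ← Real.norm_eq_abs]
  refine norm_integral_le_of_norm_le (hw.const_mul _) (.of_forall fun x => ?_)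
  rw [Real.norm_eq_abs, ← mul_sub, abs_mul, abs_of_nonneg (hw0 x), mul_comm]
  refine mul_le_mul_of_nonneg_right ?_ (hw0 x)
  simpa using abs_abs_sub_abs_le_abs_sub (v - f x) (vb - f x)

lemma abs_sub_mul_integral_le_add :
    |v - vb| * ∫ x, w x ∂μ ≤ ∫ x, w x * |v - f x| ∂μ + ∫ x, w x * |vb - f x| ∂μ := by
  rw [← integral_add hv hvb, ← integral_const_mul |v - vb| w]
  refine integral_mono (hw.const_mul _) (hv.add hvb) fun x => ?_
  rw [← mul_add, mul_comm]
  refine mul_le_mul_of_nonneg_left ?_ (hw0 x)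
  simpa only [abs_sub_comm (f x) vb] using abs_sub_le v (f x) vb

end WeightedAbsoluteMoment

lemma div_sqrt_mul_mem_Icc {g a b : ℝ} (hg : 0 ≤ g) (hga : g ≤ a) (hgb : g ≤ b) (ha : 0 < a)
    (hb : 0 < b) : g / Real.sqrt (a * b) ∈ Set.Icc (0 : ℝ) 1 := by
  have hs : 0 < Real.sqrt (a * b) := Real.sqrt_pos.2 (mul_pos ha hb)
  refine ⟨div_nonneg hg hs.le, (div_le_one hs).2 ((Real.le_sqrt hg (mul_pos ha hb).le).2 ?_)⟩
  nlinarith [mul_le_mul hga hgb hg ha.le]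

theorem Gamma_le_min_general (μ : Measure (ℝ × ℝ)) (ρ : ℝ) (hρ : 0 < ρ)
    (hmom : Integrable (fun p : ℝ × ℝ => p.2 ^ 2 * (1 + |p.1|)) μ)
    (v vb : ℝ) (hv : v ≤ vb) :
    let D : ℝ → ℝ := fun u => ρ * ∫ p : ℝ × ℝ, p.2 ^ 2 * |u - p.1| ∂μ
    let Γ : ℝ := (1 / 2) * (D v + D vb - (vb - v) * (ρ * ∫ p : ℝ × ℝ, p.2 ^ 2 ∂μ))
    Γ ≤ min (D v) (D vb) ∧
      (0 < D v → 0 < D vb → Γ / Real.sqrt (D v * D vb) ∈ Set.Icc (0 : ℝ) 1) := by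
  intro D Γ
  have hw0 : 0 ≤ fun p : ℝ × ℝ => p.2 ^ 2 := fun p => sq_nonneg p.2
  have hw : AEStronglyMeasurable (fun p : ℝ × ℝ => p.2 ^ 2) μ := by fun_prop
  have hf : AEStronglyMeasurable (fun p : ℝ × ℝ => p.1) μ := by fun_prop
  have hJ := integrable_of_integrable_mul_one_add_abs hw hw0 hmom
  have hI := integrable_mul_abs_sub hw hf hw0 hmom
  have hlip := abs_integral_mul_abs_sub_sub_le hw0 hJ (hI v) (hI vb)
  have htri := abs_sub_mul_integral_le_add hw0 hJ (hI v) (hI vb)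
  rw [abs_sub_comm v, abs_of_nonneg (sub_nonneg.2 hv)] at hlip htri
  obtain ⟨hlip₁, hlip₂⟩ := abs_le.1 hlip
  have hΓ0 : 0 ≤ Γ := by simp only [Γ, D]; nlinarith
  have hΓv : Γ ≤ D v := by simp only [Γ, D]; nlinarith
  have hΓvb : Γ ≤ D vb := by simp only [Γ, D]; nlinarith
  exact ⟨le_min hΓv hΓvb, div_sqrt_mul_mem_Icc hΓ0 hΓv hΓvb⟩

/-- `Γ(v,v̄) ≤ min(D(v), D(v̄))`, so the normalized correlation
`Γ(v,v̄)/√(D(v)D(v̄))` lies in `[0,1]` whenever `D(v), D(v̄) > 0`. -/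
theorem Gamma_le_min (μ : Measure (ℝ × ℝ)) [IsProbabilityMeasure μ] (ρ : ℝ) (hρ : 0 < ρ)
    (hmom : Integrable (fun p : ℝ × ℝ => p.2 ^ 2 * (1 + |p.1|)) μ)
    (v vb : ℝ) (hv : v ≤ vb) :
    let D : ℝ → ℝ := fun u => ρ * ∫ p : ℝ × ℝ, p.2 ^ 2 * |u - p.1| ∂μ
    let Γ : ℝ := (1 / 2) * (D v + D vb - (vb - v) * (ρ * ∫ p : ℝ × ℝ, p.2 ^ 2 ∂μ))
    Γ ≤ min (D v) (D vb) ∧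
      (0 < D v → 0 < D vb → Γ / Real.sqrt (D v * D vb) ∈ Set.Icc (0 : ℝ) 1) :=
  Gamma_le_min_general μ ρ hρ hmom v vb hv
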